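/- Let Ω = Σ_l p_l P_l be a convex combination of orthogonal projectors P_l (l = 1,…,g) on a finite-dimensional Hilbert space, each satisfying P_l Ψ = Ψ for a fixed unit vector Ψ, with p_l > 0 summing to 1, and suppose each P_l has rank at least 2. Then the second largest eigenvalue β(Ω) satisfies β(Ω) ≥ 1/g. Equality holds if and only if p_l = 1/g for all l and the operators P_l − |Ψ⟩⟨Ψ| are mutually orthogonal (i.e. their pairwise products vanish). -/

import Mathlib

/-!
Write `E = |Ψ⟩⟨Ψ|` and `Q l = P l - E`. Each `Q l` is an orthogonal projector annihilating `Ψ`,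
nonzero because `rank (P l) ≥ 2 > rank E`, and on `Ψᗮ` the quadratic form of `Ω` is
`∑ l, p l ⟪x, Q l x⟫`. Testing it on a vector in the range of `Q l` gives `β ≥ p l`, hence
`β ≥ max p ≥ 1/g`. If `β = 1/g` then every `p l = 1/g`, and for `w` in the range of `Q m` the
bound reads `∑ l ⟪w, Q l w⟫ ≤ ⟪w, Q m w⟫`, which forces `Q l w = 0` for `l ≠ m`. Conversely,
mutually orthogonal `Q l` sum to a projector, whose quadratic form is at most `‖x‖²`.
-/

open Matrix
open scoped ComplexOrder

lemma IsStarProjection.sum {R ι : Type*} [NonUnitalNonAssocSemiring R] [StarRing R]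
    {Q : ι → R} (s : Finset ι) (hQ : ∀ i ∈ s, IsStarProjection (Q i))
    (horth : (s : Set ι).Pairwise fun i j ↦ Q i * Q j = 0) :
    IsStarProjection (∑ i ∈ s, Q i) := by
  classical
  induction s using Finset.induction_on with
  | empty => simp
  | insert a s ha ih =>
    rw [Finset.coe_insert, Set.pairwise_insert] at horth
    rw [Finset.sum_insert ha]
    refine (hQ a (s.mem_insert_self a)).add
      (ih (fun i hi ↦ hQ i (Finset.mem_insert_of_mem hi)) horth.1) ?_
    rw [Finset.mul_sum]
    exact Finset.sum_eq_zero fun i hi ↦ (horth.2 i hi (ne_of_mem_of_not_mem hi ha).symm).1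

lemma isStarProjection_vecMulVec_star {R n : Type*} [CommSemiring R] [StarRing R] [Fintype n]
    {ψ : n → R} (hψ : star ψ ⬝ᵥ ψ = 1) : IsStarProjection (vecMulVec ψ (star ψ)) where
  isIdempotentElem := by
    rw [IsIdempotentElem, vecMulVec_mul_vecMulVec, hψ, one_smul]
  isSelfAdjoint := by
    rw [IsSelfAdjoint, star_eq_conjTranspose, conjTranspose_vecMulVec, star_star]

section

variable {n : Type*} [Fintype n]

lemma re_star_dotProduct_self_nonneg (v : n → ℂ) : 0 ≤ (star v ⬝ᵥ v).re :=
  (Complex.nonneg_iff.1 (dotProduct_star_self_nonneg v)).1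

lemma re_star_dotProduct_self_eq_zero {v : n → ℂ} : (star v ⬝ᵥ v).re = 0 ↔ v = 0 := by
  rw [← dotProduct_star_self_eq_zero, Complex.ext_iff,
    ← (Complex.nonneg_iff.1 (dotProduct_star_self_nonneg v)).2]
  simp

lemma ofReal_re_star_dotProduct_self (v : n → ℂ) : ((star v ⬝ᵥ v).re : ℂ) = star v ⬝ᵥ v :=
  Complex.ext rfl (Complex.nonneg_iff.1 (dotProduct_star_self_nonneg v)).2

lemma IsSelfAdjoint.star_dotProduct_mulVec {A : Matrix n n ℂ} (hA : IsSelfAdjoint A)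
    (v w : n → ℂ) : star v ⬝ᵥ (A *ᵥ w) = star (A *ᵥ v) ⬝ᵥ w := by
  rw [dotProduct_mulVec, star_mulVec, ← star_eq_conjTranspose, hA.star_eq]

lemma IsSelfAdjoint.star_dotProduct_mulVec_eq_zero {A : Matrix n n ℂ} (hA : IsSelfAdjoint A)
    {ψ : n → ℂ} (hψ : A *ᵥ ψ = 0) (y : n → ℂ) : star ψ ⬝ᵥ (A *ᵥ y) = 0 := by
  rw [hA.star_dotProduct_mulVec, hψ, star_zero, zero_dotProduct]

namespace IsStarProjection

variable {A : Matrix n n ℂ}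

lemma star_dotProduct_mulVec_self (hA : IsStarProjection A) (x : n → ℂ) :
    star x ⬝ᵥ (A *ᵥ x) = star (A *ᵥ x) ⬝ᵥ (A *ᵥ x) := by
  conv_lhs => rw [← hA.isIdempotentElem.eq, ← mulVec_mulVec]
  exact hA.isSelfAdjoint.star_dotProduct_mulVec x (A *ᵥ x)

lemma re_star_dotProduct_mulVec_nonneg (hA : IsStarProjection A) (x : n → ℂ) :
    0 ≤ (star x ⬝ᵥ (A *ᵥ x)).re := by
  rw [hA.star_dotProduct_mulVec_self]
  exact re_star_dotProduct_self_nonneg _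

lemma re_star_dotProduct_mulVec_eq_zero_iff (hA : IsStarProjection A) (x : n → ℂ) :
    (star x ⬝ᵥ (A *ᵥ x)).re = 0 ↔ A *ᵥ x = 0 := by
  rw [hA.star_dotProduct_mulVec_self, re_star_dotProduct_self_eq_zero]

lemma re_star_dotProduct_mulVec_le (hA : IsStarProjection A) (x : n → ℂ) :
    (star x ⬝ᵥ (A *ᵥ x)).re ≤ (star x ⬝ᵥ x).re := by
  classical
  have h := hA.one_sub.re_star_dotProduct_mulVec_nonneg x
  rw [sub_mulVec, one_mulVec, dotProduct_sub, Complex.sub_re] at h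
  linarith

end IsStarProjection

lemma sub_vecMulVec_ne_zero_of_two_le_rank {R : Type*} [CommRing R] [StrongRankCondition R]
    {P : Matrix n n R} (u v : n → R) (hP : 2 ≤ P.rank) : P - vecMulVec u v ≠ 0 := by
  intro h
  have := rank_vecMulVec_le u v
  rw [← sub_eq_zero.1 h] at this
  omega

lemma vecMulVec_mulVec_eq_zero {R : Type*} [Semiring R] {u v x : n → R} (hx : v ⬝ᵥ x = 0) :
    vecMulVec u v *ᵥ x = 0 := by
  rw [vecMulVec_mulVec, hx, MulOpposite.op_zero, zero_smul]

lemma re_star_dotProduct_sum_smul_mulVec {ι : Type*} [Fintype ι] (p : ι → ℝ)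
    (A : ι → Matrix n n ℂ) (x : n → ℂ) :
    (star x ⬝ᵥ ((∑ l, (p l : ℂ) • A l) *ᵥ x)).re = ∑ l, p l * (star x ⬝ᵥ (A l *ᵥ x)).re := by
  simp only [sum_mulVec, smul_mulVec, dotProduct_sum, dotProduct_smul, Complex.re_sum,
    smul_eq_mul, Complex.re_ofReal_mul]

lemma re_star_dotProduct_mulVec_le_of_forall_unit {A : Matrix n n ℂ} {ψ : n → ℂ} {β : ℝ}
    (hβ : ∀ x, star x ⬝ᵥ x = 1 → star ψ ⬝ᵥ x = 0 → (star x ⬝ᵥ (A *ᵥ x)).re ≤ β)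
    {w : n → ℂ} (hw : star ψ ⬝ᵥ w = 0) :
    (star w ⬝ᵥ (A *ᵥ w)).re ≤ β * (star w ⬝ᵥ w).re := by
  rcases eq_or_ne w 0 with rfl | hw0
  · simp
  set c := (star w ⬝ᵥ w).re
  have hc : 0 < c := (re_star_dotProduct_self_nonneg w).lt_of_ne'
    (re_star_dotProduct_self_eq_zero.not.2 hw0)
  set t : ℝ := (Real.sqrt c)⁻¹
  have htc : t * t * c = 1 := by
    rw [← mul_inv, Real.mul_self_sqrt hc.le, inv_mul_cancel₀ hc.ne']
  have hx := hβ ((t : ℂ) • w) ?_ ?_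
  · rw [mulVec_smul, star_smul, Complex.star_def, Complex.conj_ofReal, dotProduct_smul,
      smul_dotProduct, smul_eq_mul, smul_eq_mul, ← mul_assoc, ← Complex.ofReal_mul,
      Complex.re_ofReal_mul] at hx
    calc (star w ⬝ᵥ (A *ᵥ w)).re = t * t * c * (star w ⬝ᵥ (A *ᵥ w)).re := by rw [htc, one_mul]
      _ = c * (t * t * (star w ⬝ᵥ (A *ᵥ w)).re) := by ring
      _ ≤ c * β := mul_le_mul_of_nonneg_left hx hc.le
      _ = β * c := mul_comm c β
  · rw [star_smul, Complex.star_def, Complex.conj_ofReal, dotProduct_smul, smul_dotProduct,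
      ← ofReal_re_star_dotProduct_self, smul_eq_mul, smul_eq_mul, ← mul_assoc]
    exact_mod_cast htc
  · rw [dotProduct_smul, hw, smul_zero]

end

section

variable {n ι : Type*} [Fintype n] [Fintype ι] {Q : ι → Matrix n n ℂ} {ψ : n → ℂ} {p : ι → ℝ}

lemma weight_le_of_rayleigh_bound (hQ : ∀ i, IsStarProjection (Q i)) (hQψ : ∀ i, Q i *ᵥ ψ = 0)
    (hp : ∀ i, 0 ≤ p i) {β : ℝ}
    (hβ : ∀ x, star x ⬝ᵥ x = 1 → star ψ ⬝ᵥ x = 0 →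
      (star x ⬝ᵥ ((∑ i, (p i : ℂ) • Q i) *ᵥ x)).re ≤ β)
    {i : ι} (hQi : Q i ≠ 0) : p i ≤ β := by
  obtain ⟨y, hy⟩ : ∃ y, Q i *ᵥ y ≠ 0 := by
    by_contra! h
    exact hQi (ext_iff_mulVec.2 fun y ↦ by rw [h y, zero_mulVec])
  set w := Q i *ᵥ y
  have hQw : Q i *ᵥ w = w := by rw [mulVec_mulVec, (hQ i).isIdempotentElem.eq]
  have hw : 0 < (star w ⬝ᵥ w).re := (re_star_dotProduct_self_nonneg w).lt_of_ne'
    (re_star_dotProduct_self_eq_zero.not.2 hy)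
  have hbound := re_star_dotProduct_mulVec_le_of_forall_unit hβ
    ((hQ i).isSelfAdjoint.star_dotProduct_mulVec_eq_zero (hQψ i) y)
  rw [re_star_dotProduct_sum_smul_mulVec] at hbound
  have hterm : p i * (star w ⬝ᵥ w).re ≤ ∑ k, p k * (star w ⬝ᵥ (Q k *ᵥ w)).re := by
    calc p i * (star w ⬝ᵥ w).re = p i * (star w ⬝ᵥ (Q i *ᵥ w)).re := by rw [hQw]
      _ ≤ _ := Finset.single_le_sum (f := fun k ↦ p k * (star w ⬝ᵥ (Q k *ᵥ w)).re)
        (fun k _ ↦ mul_nonneg (hp k) ((hQ k).re_star_dotProduct_mulVec_nonneg w))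
        (Finset.mem_univ i)
  exact le_of_mul_le_mul_right (hterm.trans hbound) hw

lemma mul_eq_zero_of_rayleigh_bound (hQ : ∀ i, IsStarProjection (Q i))
    (hQψ : ∀ i, Q i *ᵥ ψ = 0) {c : ℝ} (hc : 0 < c) (hp : ∀ i, p i = c)
    (hβ : ∀ x, star x ⬝ᵥ x = 1 → star ψ ⬝ᵥ x = 0 →
      (star x ⬝ᵥ ((∑ i, (p i : ℂ) • Q i) *ᵥ x)).re ≤ c)
    {i j : ι} (hij : i ≠ j) : Q i * Q j = 0 := by
  classical
  suffices h : ∀ w, Q j *ᵥ w = w → star ψ ⬝ᵥ w = 0 → Q i *ᵥ w = 0 by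
    refine ext_iff_mulVec.2 fun y ↦ ?_
    rw [← mulVec_mulVec, zero_mulVec]
    exact h _ (by rw [mulVec_mulVec, (hQ j).isIdempotentElem.eq])
      ((hQ j).isSelfAdjoint.star_dotProduct_mulVec_eq_zero (hQψ j) y)
  intro w hQw hwψ
  have hbound := re_star_dotProduct_mulVec_le_of_forall_unit hβ hwψ
  simp only [re_star_dotProduct_sum_smul_mulVec, hp, ← Finset.mul_sum] at hbound
  have hsum := le_of_mul_le_mul_left hbound hc
  have hpair : (star w ⬝ᵥ (Q i *ᵥ w)).re + (star w ⬝ᵥ (Q j *ᵥ w)).re ≤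
      ∑ k, (star w ⬝ᵥ (Q k *ᵥ w)).re := by
    rw [← Finset.sum_pair (f := fun k ↦ (star w ⬝ᵥ (Q k *ᵥ w)).re) hij]
    exact Finset.sum_le_sum_of_subset_of_nonneg (Finset.subset_univ _)
      fun k _ _ ↦ (hQ k).re_star_dotProduct_mulVec_nonneg w
  rw [hQw] at hpair
  exact ((hQ i).re_star_dotProduct_mulVec_eq_zero_iff w).1
    (le_antisymm (by linarith) ((hQ i).re_star_dotProduct_mulVec_nonneg w))

lemma rayleigh_le_of_pairwise_mul_eq_zero (hQ : ∀ i, IsStarProjection (Q i)) {c : ℝ}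
    (hc : 0 ≤ c) (hp : ∀ i, p i = c) (horth : Pairwise fun i j ↦ Q i * Q j = 0)
    {x : n → ℂ} (hx : star x ⬝ᵥ x = 1) :
    (star x ⬝ᵥ ((∑ i, (p i : ℂ) • Q i) *ᵥ x)).re ≤ c := by
  have hS := (IsStarProjection.sum Finset.univ (fun i _ ↦ hQ i)
    fun i _ j _ hij ↦ horth hij).re_star_dotProduct_mulVec_le x
  rw [hx, Complex.one_re, sum_mulVec, dotProduct_sum, Complex.re_sum] at hS
  rw [re_star_dotProduct_sum_smul_mulVec]
  simp only [hp, ← Finset.mul_sum]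
  exact mul_le_of_le_one_right hc hS

end

/-- for Ω = Σ_l p_l P_l a convex combination of projectors of rank ≥ 2 fixing a
unit vector Ψ, the second largest eigenvalue β(Ω) satisfies β(Ω) ≥ 1/g, with equality iff
p_l = 1/g for all l and the operators P_l − |Ψ⟩⟨Ψ| are mutually orthogonal. -/
theorem stmt2 {n g : ℕ} (hg : 0 < g)
    (P : Fin g → Matrix (Fin n) (Fin n) ℂ)
    (hPherm : ∀ l, (P l).IsHermitian) (hPproj : ∀ l, P l * P l = P l)
    (hPrank : ∀ l, 2 ≤ (P l).rank)
    (Ψ : Fin n → ℂ) (hΨunit : star Ψ ⬝ᵥ Ψ = 1) (hPfix : ∀ l, P l *ᵥ Ψ = Ψ)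
    (p : Fin g → ℝ) (hp : ∀ l, 0 < p l) (hpsum : ∑ l, p l = 1)
    (Ω : Matrix (Fin n) (Fin n) ℂ) (hΩ : Ω = ∑ l, (p l : ℂ) • P l)
    (β : ℝ)
    (hβ : IsGreatest {r : ℝ | ∃ x : Fin n → ℂ, star x ⬝ᵥ x = 1 ∧ star Ψ ⬝ᵥ x = 0 ∧
        (star x ⬝ᵥ (Ω *ᵥ x)).re = r} β) :
    1 / (g : ℝ) ≤ β ∧
    (β = 1 / (g : ℝ) ↔
      ((∀ l, p l = 1 / (g : ℝ)) ∧
        ∀ l m, l ≠ m →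
          (P l - vecMulVec Ψ (star Ψ)) * (P m - vecMulVec Ψ (star Ψ)) = 0)) := by
  set Q : Fin g → Matrix (Fin n) (Fin n) ℂ := fun l ↦ P l - vecMulVec Ψ (star Ψ)
  have hE := isStarProjection_vecMulVec_star hΨunit
  have hQ l : IsStarProjection (Q l) :=
    hE.sub_of_mul_eq_right ⟨hPproj l, (hPherm l).isSelfAdjoint⟩ (by rw [mul_vecMulVec, hPfix l])
  have hQΨ l : Q l *ᵥ Ψ = 0 := by
    rw [sub_mulVec, hPfix l, vecMulVec_mulVec, hΨunit, MulOpposite.op_one, one_smul, sub_self]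
  have hΩx x (hx : star Ψ ⬝ᵥ x = 0) : Ω *ᵥ x = (∑ l, (p l : ℂ) • Q l) *ᵥ x := by
    simp only [hΩ, Q, sum_mulVec, smul_mulVec, sub_mulVec, vecMulVec_mulVec_eq_zero hx,
      sub_zero]
  have hbound x (hx : star x ⬝ᵥ x = 1) (hxΨ : star Ψ ⬝ᵥ x = 0) :
      (star x ⬝ᵥ ((∑ l, (p l : ℂ) • Q l) *ᵥ x)).re ≤ β :=
    hΩx x hxΨ ▸ hβ.2 ⟨x, hx, hxΨ, rfl⟩
  have hpβ l : p l ≤ β := weight_le_of_rayleigh_bound hQ hQΨ (fun l ↦ (hp l).le) hbound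
    (sub_vecMulVec_ne_zero_of_two_le_rank _ _ (hPrank l))
  have hgβ : 1 / (g : ℝ) ≤ β := by
    rw [div_le_iff₀ (by exact_mod_cast hg), ← hpsum]
    calc ∑ l, p l ≤ ∑ _l : Fin g, β := Finset.sum_le_sum fun l _ ↦ hpβ l
      _ = β * g := by simp [mul_comm]
  refine ⟨hgβ, fun hβg ↦ ?_, fun ⟨hpg, horth⟩ ↦ ?_⟩
  · have hpg l : p l = 1 / (g : ℝ) := by
      refine (Finset.sum_eq_sum_iff_of_le fun l _ ↦ hβg ▸ hpβ l).1 ?_ l (Finset.mem_univ l)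
      simp [hpsum, hg.ne']
    exact ⟨hpg, fun l m ↦ mul_eq_zero_of_rayleigh_bound hQ hQΨ (by positivity) hpg
      (hβg ▸ hbound)⟩
  · obtain ⟨x, hx, hxΨ, rfl⟩ := hβ.1
    refine le_antisymm ?_ hgβ
    rw [hΩx x hxΨ]
    exact rayleigh_le_of_pairwise_mul_eq_zero hQ (by positivity) hpg horth hx
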